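/- Let f be a continuous self-map of a compact topological space X and let (a_n) be a subadditive sequence of continuous functions a_n : X → ℝ (i.e. a_{n+k}(x) ≤ a_k(x) + a_n(f^k x)). Suppose there exists N ∈ ℕ such that a_N(x) < 0 for all x ∈ X. Then there exist L > 0 and θ ∈ (0,1) such that exp(a_n(x)) ≤ L θ^n for all x ∈ X and n ∈ ℕ. -/
import Mathlib


/-- If a subadditive sequence of continuous functions over a continuous map of a compact
space has `a_N < 0` everywhere for some `N`, then `exp(a_n(x)) ≤ L θ^n` for some `L > 0`
and `θ ∈ (0,1)`. -/
theorem subadditive_uniform_decay {X : Type*} [TopologicalSpace X] [CompactSpace X]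
    (f : X → X) (hf : Continuous f)
    (a : ℕ → X → ℝ) (hcont : ∀ n, Continuous (a n))
    (hsub : ∀ (x : X) (n k : ℕ), a (n + k) x ≤ a k x + a n (f^[k] x))
    (hneg : ∃ N : ℕ, ∀ x : X, a N x < 0) :
    ∃ L > (0 : ℝ), ∃ θ ∈ Set.Ioo (0 : ℝ) 1,
      ∀ (x : X) (n : ℕ), Real.exp (a n x) ≤ L * θ ^ n := by
  rcases isEmpty_or_nonempty X with hX | hX
  · exact ⟨1, one_pos, 1/2, ⟨by norm_num, by norm_num⟩, fun x => (IsEmpty.false x).elim⟩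
  obtain ⟨N, hN⟩ := hneg
  -- N must be positive
  rcases Nat.eq_zero_or_pos N with rfl | hNpos
  · obtain ⟨x⟩ := hX
    have h0 := hsub x 0 0
    have := hN x
    simp at h0
    linarith
  -- a N attains a maximum; its negative is c > 0
  obtain ⟨c, hcpos, hNc⟩ : ∃ c : ℝ, 0 < c ∧ ∀ x : X, a N x ≤ -c := by
    obtain ⟨xm, -, hxm⟩ := CompactSpace.isCompact_univ.exists_isMaxOn Set.univ_nonempty
      (hcont N).continuousOn
    exact ⟨-(a N xm), by simpa using hN xm, fun x => by
      have := hxm (Set.mem_univ x); simpa using this⟩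
  -- uniform bound for a_r, r ≤ N
  obtain ⟨M, hMle⟩ : ∃ M : ℝ, ∀ r ≤ N, ∀ x : X, a r x ≤ M := by
    have hB : ∀ n : ℕ, ∃ b : ℝ, ∀ x : X, a n x ≤ b := by
      intro n
      obtain ⟨x0, -, hx0⟩ := CompactSpace.isCompact_univ.exists_isMaxOn Set.univ_nonempty
        (hcont n).continuousOn
      exact ⟨a n x0, fun x => hx0 (Set.mem_univ x)⟩
    choose B hBle using hB
    refine ⟨(Finset.range (N+1)).sup' ⟨0, Finset.mem_range.2 (Nat.succ_pos N)⟩ B,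
      fun r hr x => ?_⟩
    exact le_trans (hBle r x) (Finset.le_sup' B (Finset.mem_range.2 (Nat.lt_succ_of_le hr)))
  -- key induction
  have key : ∀ (q : ℕ) (x : X), a (q * N) x ≤ M - q * c := by
    intro q
    induction q with
    | zero => intro x; simpa using hMle 0 (Nat.zero_le N) x
    | succ q ih =>
      intro x
      have h1 : a (N + q * N) x ≤ a (q * N) x + a N (f^[q * N] x) := hsub x N (q * N)
      have h2 := ih x
      have h3 := hNc (f^[q * N] x)
      have heq : (q + 1) * N = N + q * N := by ring
      rw [heq]
      push_cast
      linarith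
  -- main bound
  have hNpos' : (0:ℝ) < N := by exact_mod_cast hNpos
  have main : ∀ (x : X) (n : ℕ), a n x ≤ 2 * M + c - n * (c / N) := by
    intro x n
    have hnd : n % N + n / N * N = n := Nat.mod_add_div' n N
    have hrlt : n % N < N := Nat.mod_lt n hNpos
    have h1 : a (n % N + n / N * N) x ≤ a (n / N * N) x + a (n % N) (f^[n / N * N] x) :=
      hsub x (n % N) (n / N * N)
    rw [hnd] at h1
    have h2 := key (n / N) x
    have h3 := hMle (n % N) hrlt.le (f^[n / N * N] x)
    have hnd' : ((n % N : ℕ) : ℝ) + ((n / N : ℕ) : ℝ) * N = n := by exact_mod_cast hnd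
    have hrlt' : ((n % N : ℕ) : ℝ) < N := by exact_mod_cast hrlt
    have hqge : (n : ℝ) - N ≤ ((n / N : ℕ) : ℝ) * N := by linarith
    have hqc : (n : ℝ) * (c / N) - c ≤ ((n / N : ℕ) : ℝ) * c := by
      have h5 : ((n : ℝ) - N) * c ≤ ((n / N : ℕ) : ℝ) * N * c :=
        mul_le_mul_of_nonneg_right hqge hcpos.le
      calc (n : ℝ) * (c / N) - c = ((n : ℝ) - N) * c / N := by field_simp
        _ ≤ ((n / N : ℕ) : ℝ) * N * c / N := by gcongr
        _ = ((n / N : ℕ) : ℝ) * c := by field_simp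
    linarith
  refine ⟨Real.exp (2 * M + c), Real.exp_pos _, Real.exp (-(c / N)), ⟨Real.exp_pos _,
    Real.exp_lt_one_iff.2 (neg_lt_zero.2 (by positivity))⟩, fun x n => ?_⟩
  rw [← Real.exp_nat_mul, ← Real.exp_add]
  apply Real.exp_le_exp.2
  have := main x n
  linarith
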